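/- Let K be a field of characteristic zero and extend the derivation ∂ = y ∂/∂x + z ∂/∂y to the localization B = K[x,y,z][z⁻¹]. Then every element s ∈ B with ∂(s) = 1 has the form s = y/z + h(z, z⁻¹, y² − 2xz) for some polynomial h; equivalently, s − y/z ∈ Ker(∂) and Ker(∂) on B equals K[z, z⁻¹, y² − 2xz]. -/

import Mathlib

/-!
Put `w = y² - 2xz`. Since `∂w = ∂z = 0` and `x = (y² - w) / 2z` in `B = K[x,y,z][z⁻¹]`, the
substitution `x ↦ w` is an automorphism of `B`, so every `q ∈ B` is `f(w, y, z) z⁻ⁿ`, and in these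
coordinates `∂` is `z ∂/∂y`. Hence `∂q = 0` forces `∂f/∂y = 0`, i.e. (in characteristic zero) `f`
does not involve `y`, and `q ∈ K[z, z⁻¹, w]`. Slices differ from `y/z` by elements of the kernel.
-/

open MvPolynomial

/-- The derivation `y ∂/∂x + z ∂/∂y` on `K[x,y,z]`, where `x = X 0`, `y = X 1`, `z = X 2`. -/
noncomputable def parabolicDerivation (K : Type*) [CommRing K] :
    Derivation K (MvPolynomial (Fin 3) K) (MvPolynomial (Fin 3) K) :=
  MvPolynomial.mkDerivation K ![X 1, X 2, 0]

/-- The canonical map `K[x,y,z] → K[x,y,z][z⁻¹]`. -/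
noncomputable def locMap (K : Type*) [Field K] :
    MvPolynomial (Fin 3) K →+* Localization.Away (X 2 : MvPolynomial (Fin 3) K) :=
  algebraMap _ _


namespace MvPolynomial

variable {R σ : Type*} [CommSemiring R]

theorem notMem_vars_of_pderiv_eq_zero [NoZeroDivisors R] [CharZero R] {i : σ}
    {f : MvPolynomial σ R} (h : pderiv i f = 0) : i ∉ f.vars := by
  intro hi
  obtain ⟨m, hm, hmi⟩ := (mem_vars_iff_mem_support i).1 hi
  have hm' : m - Finsupp.single i 1 + Finsupp.single i 1 = m :=
    tsub_add_cancel_of_le (Finsupp.single_le_iff.2 (Nat.one_le_iff_ne_zero.2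
      (Finsupp.mem_support_iff.1 hmi)))
  have := coeff_pderiv (i := i) f (m - Finsupp.single i 1)
  rw [h, coeff_zero, hm', eq_comm, mul_eq_zero] at this
  exact this.elim (mem_support_iff.1 hm) (Nat.cast_add_one_ne_zero _)

theorem aeval_mem_adjoin_of_vars_subset {A : Type*} [CommSemiring A] [Algebra R A]
    (v : σ → A) {s : Set σ} {f : MvPolynomial σ R} (h : ↑f.vars ⊆ s) :
    aeval v f ∈ Algebra.adjoin R (v '' s) := by
  have hf : f ∈ Algebra.adjoin R (X '' s) := mem_supported.2 h
  rw [show v '' s = aeval (R := R) v '' (X '' s) by rw [Set.image_image]; simp, ← AlgHom.map_adjoin]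
  exact ⟨f, hf, rfl⟩

theorem _root_.Derivation.map_mvPolynomial_aeval [Fintype σ] {A M : Type*} [CommSemiring A]
    [Algebra R A] [AddCommMonoid M] [Module A M] [Module R M] [IsScalarTower R A M]
    (D : Derivation R A M) (v : σ → A) (f : MvPolynomial σ R) :
    D (aeval v f) = ∑ i, aeval v (pderiv i f) • D (v i) := by
  induction f using MvPolynomial.induction_on with
  | C a => simp
  | add p q hp hq => simp only [map_add, hp, hq, add_smul, Finset.sum_add_distrib]
  | mul_X p j hp =>
    classical
    simp only [map_mul, aeval_X, D.leibniz, hp, pderiv_mul, map_add, add_smul, smul_smul,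
      Finset.sum_add_distrib, Finset.smul_sum]
    simp [pderiv_X, Pi.single_apply, mul_comm, add_comm]

end MvPolynomial

namespace Localization.Away

variable {R : Type*} [CommSemiring R] (x : R)

theorem algebraMap_mul_invSelf : algebraMap R (Away x) x * invSelf x = 1 := by
  rw [invSelf, mk_eq_mk']
  exact IsLocalization.Away.mul_invSelf x

theorem exists_eq_algebraMap_mul_invSelf_pow (q : Away x) :
    ∃ (a : R) (n : ℕ), q = algebraMap R (Away x) a * invSelf x ^ n := by
  obtain ⟨n, a, h⟩ := IsLocalization.Away.surj x q
  refine ⟨a, n, ?_⟩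
  rw [← h, mul_assoc, ← mul_pow, algebraMap_mul_invSelf, one_pow, mul_one]

theorem map_invSelf {F : Type*} [FunLike F (Away x) (Away x)] [MonoidHomClass F (Away x) (Away x)]
    (f : F) (hf : f (algebraMap R (Away x) x) = algebraMap R (Away x) x) :
    f (invSelf x) = invSelf x := by
  have h : algebraMap R (Away x) x * f (invSelf x) = 1 := by
    rw [← hf, ← map_mul, algebraMap_mul_invSelf, map_one]
  exact (left_inv_eq_right_inv (by rw [mul_comm, algebraMap_mul_invSelf]) h).symm

variable {A : Type*} [CommSemiring A] [Algebra A R] {x}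

noncomputable def liftEnd (f : R →ₐ[A] Away x) (hf : f x = algebraMap R (Away x) x) :
    Away x →ₐ[A] Away x :=
  IsLocalization.Away.liftAlgHom x (hf ▸ IsLocalization.Away.algebraMap_isUnit x)

@[simp]
theorem liftEnd_algebraMap (f : R →ₐ[A] Away x) (hf : f x = algebraMap R (Away x) x) (a : R) :
    liftEnd f hf (algebraMap R (Away x) a) = f a := by
  simp [liftEnd]

@[simp]
theorem liftEnd_invSelf (f : R →ₐ[A] Away x) (hf : f x = algebraMap R (Away x) x) :
    liftEnd f hf (invSelf x) = invSelf x :=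
  map_invSelf x _ (by rw [liftEnd_algebraMap, hf])

theorem liftEnd_comp_liftEnd {f g : R →ₐ[A] Away x} (hf : f x = algebraMap R (Away x) x)
    (hg : g x = algebraMap R (Away x) x)
    (h : (liftEnd f hf).comp g = IsScalarTower.toAlgHom A R (Away x)) :
    (liftEnd f hf).comp (liftEnd g hg) = AlgHom.id A (Away x) :=
  Localization.algHom_ext _ <| AlgHom.ext fun a => by
    change liftEnd f hf (liftEnd g hg (algebraMap R _ a)) = algebraMap R _ a
    simpa using AlgHom.congr_fun h a

end Localization.Away

open Localization.Away

theorem algebraMap_inv_two_mul_two {K A : Type*} [Field K] [NeZero (2 : K)] [Semiring A]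
    [Algebra K A] : algebraMap K A 2⁻¹ * 2 = 1 := by
  rw [← map_ofNat (algebraMap K A) 2, ← map_mul, inv_mul_cancel₀ two_ne_zero, map_one]

section

variable (K : Type*) [Field K]

local notation "P" => MvPolynomial (Fin 3) K
local notation "B" => Localization.Away (X 2 : MvPolynomial (Fin 3) K)
local notation "x" => algebraMap P B (X 0)
local notation "y" => algebraMap P B (X 1)
local notation "z" => algebraMap P B (X 2)
local notation "w" => algebraMap P B (X 1 ^ 2 - 2 * X 0 * X 2)

theorem parabolicDerivation_X (i : Fin 3) :
    parabolicDerivation K (X i) = (![X 1, X 2, 0] : Fin 3 → P) i :=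
  mkDerivation_X _ _ _

theorem parabolicDerivation_invariant :
    parabolicDerivation K (X 1 ^ 2 - 2 * X 0 * X 2 : P) = 0 := by
  have h2 : parabolicDerivation K (2 : P) = 0 := by
    simpa using (parabolicDerivation K).map_natCast 2
  simp only [map_sub, Derivation.leibniz_pow, Derivation.leibniz, parabolicDerivation_X, h2,
    Matrix.cons_val, smul_eq_mul, nsmul_eq_mul, Nat.cast_ofNat, mul_zero, add_zero]
  ring

noncomputable def invariantSubst : P →ₐ[K] B :=
  aeval ![w, y, z]

noncomputable def invariantUnsubst : P →ₐ[K] B :=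
  aeval ![algebraMap K B 2⁻¹ * (y ^ 2 - x) * invSelf (X 2), y, z]

theorem invariantSubst_X_two : invariantSubst K (X 2) = z := by
  simp [invariantSubst]

theorem invariantUnsubst_X_two : invariantUnsubst K (X 2) = z := by
  simp [invariantUnsubst]

section

variable [NeZero (2 : K)]

theorem liftEnd_invariantSubst_comp_invariantUnsubst :
    (liftEnd (invariantSubst K) (invariantSubst_X_two K)).comp (invariantUnsubst K) =
      IsScalarTower.toAlgHom K P B := by
  have h2 : algebraMap K B 2⁻¹ * 2 = 1 := algebraMap_inv_two_mul_two
  refine MvPolynomial.algHom_ext fun i => ?_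
  fin_cases i
  · simp only [Fin.zero_eta, AlgHom.comp_apply, IsScalarTower.coe_toAlgHom', invariantUnsubst,
      invariantSubst, aeval_X, Matrix.cons_val_zero, Matrix.cons_val_one, map_mul, map_sub,
      map_pow, map_ofNat, AlgHom.commutes, liftEnd_algebraMap, liftEnd_invSelf]
    linear_combination (x * z * invSelf (X 2 : P)) * h2 + x * algebraMap_mul_invSelf (X 2 : P)
  all_goals simp [invariantSubst, invariantUnsubst]

theorem liftEnd_invariantUnsubst_comp_invariantSubst :
    (liftEnd (invariantUnsubst K) (invariantUnsubst_X_two K)).comp (invariantSubst K) =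
      IsScalarTower.toAlgHom K P B := by
  have h2 : algebraMap K B 2⁻¹ * 2 = 1 := algebraMap_inv_two_mul_two
  refine MvPolynomial.algHom_ext fun i => ?_
  fin_cases i
  · simp only [Fin.zero_eta, AlgHom.comp_apply, IsScalarTower.coe_toAlgHom', invariantUnsubst,
      invariantSubst, aeval_X, Matrix.cons_val_zero, Matrix.cons_val_one, Matrix.cons_val, map_mul,
      map_sub, map_pow, map_ofNat, liftEnd_algebraMap]
    linear_combination
      (-(y ^ 2 - x) * z * invSelf (X 2 : P)) * h2 - (y ^ 2 - x) * algebraMap_mul_invSelf (X 2 : P)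
  all_goals simp [invariantSubst, invariantUnsubst]

noncomputable def invariantSubstEquiv : B ≃ₐ[K] B :=
  AlgEquiv.ofAlgHom (liftEnd (invariantSubst K) (invariantSubst_X_two K))
    (liftEnd (invariantUnsubst K) (invariantUnsubst_X_two K))
    (liftEnd_comp_liftEnd _ _ (liftEnd_invariantSubst_comp_invariantUnsubst K))
    (liftEnd_comp_liftEnd _ _ (liftEnd_invariantUnsubst_comp_invariantSubst K))

theorem invariantSubstEquiv_algebraMap (f : P) :
    invariantSubstEquiv K (algebraMap P B f) = invariantSubst K f :=
  liftEnd_algebraMap _ (invariantSubst_X_two K) f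

theorem invariantSubstEquiv_invSelf : invariantSubstEquiv K (invSelf (X 2)) = invSelf (X 2) :=
  liftEnd_invSelf _ (invariantSubst_X_two K)

theorem exists_eq_invariantSubst_mul_invSelf_pow (q : B) :
    ∃ (f : P) (n : ℕ), q = invariantSubst K f * invSelf (X 2) ^ n := by
  obtain ⟨f, n, h⟩ :=
    exists_eq_algebraMap_mul_invSelf_pow (X 2 : P) ((invariantSubstEquiv K).symm q)
  refine ⟨f, n, ?_⟩
  rw [← (invariantSubstEquiv K).apply_symm_apply q, h, map_mul, map_pow,
    invariantSubstEquiv_algebraMap, invariantSubstEquiv_invSelf]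

theorem invariantSubst_injective : Function.Injective (invariantSubst K) := by
  intro f g h
  apply IsLocalization.injective B (powers_le_nonZeroDivisors_of_noZeroDivisors (X_ne_zero 2))
  apply (invariantSubstEquiv K).injective
  rwa [invariantSubstEquiv_algebraMap, invariantSubstEquiv_algebraMap]

end

variable {K}

def IsParabolicExtension (D : Derivation K B B) : Prop :=
  ∀ p : P, D (algebraMap P B p) = algebraMap P B (parabolicDerivation K p)

namespace IsParabolicExtension

variable {D : Derivation K (Localization.Away (X 2 : MvPolynomial (Fin 3) K))
    (Localization.Away (X 2 : MvPolynomial (Fin 3) K))} (hD : IsParabolicExtension D)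
include hD

theorem map_z : D z = 0 := by
  rw [hD, parabolicDerivation_X]
  exact map_zero _

theorem map_y : D y = z := by
  rw [hD, parabolicDerivation_X]
  rfl

theorem map_invariant : D w = 0 := by
  rw [hD, parabolicDerivation_invariant, map_zero]

theorem map_invSelf : D (invSelf (X 2)) = 0 := by
  rw [D.leibniz_of_mul_eq_one ((mul_comm _ _).trans (algebraMap_mul_invSelf (X 2 : P))),
    hD.map_z, smul_zero]

theorem map_y_mul_invSelf : D (y * invSelf (X 2)) = 1 := by
  rw [D.leibniz, hD.map_invSelf, hD.map_y, smul_zero, zero_add, smul_eq_mul, mul_comm,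
    algebraMap_mul_invSelf]

theorem map_invariantSubst (f : P) :
    D (invariantSubst K f) = invariantSubst K (pderiv 1 f) * z := by
  rw [invariantSubst, D.map_mvPolynomial_aeval, Fin.sum_univ_three]
  simp only [Matrix.cons_val_zero, Matrix.cons_val_one, Matrix.cons_val_two, Matrix.tail_cons,
    Matrix.head_cons]
  rw [hD.map_invariant, hD.map_y, hD.map_z]
  simp

theorem map_eq_zero_of_mem_adjoin {q : B} (hq : q ∈ Algebra.adjoin K {z, invSelf (X 2), w}) :
    D q = 0 := by
  induction hq using Algebra.adjoin_induction with
  | mem t ht =>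
    rcases ht with rfl | rfl | rfl
    · exact hD.map_z
    · exact hD.map_invSelf
    · exact hD.map_invariant
  | algebraMap r => exact D.map_algebraMap r
  | add a b _ _ ha hb => rw [map_add, ha, hb, add_zero]
  | mul a b _ _ ha hb => rw [D.leibniz, ha, hb, smul_zero, smul_zero, add_zero]

theorem mem_adjoin_of_map_eq_zero [CharZero K] {q : B} (hq : D q = 0) :
    q ∈ Algebra.adjoin K {z, invSelf (X 2), w} := by
  obtain ⟨f, n, rfl⟩ := exists_eq_invariantSubst_mul_invSelf_pow K q
  have hf : pderiv 1 f = 0 := by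
    have hu : IsUnit (z * invSelf (X 2) ^ n) :=
      (IsLocalization.Away.algebraMap_isUnit _).mul
        ((IsUnit.of_mul_eq_one_right _ (algebraMap_mul_invSelf (X 2 : P))).pow n)
    have h : invariantSubst K (pderiv 1 f) * (z * invSelf (X 2) ^ n) = 0 := by
      rw [← hq, D.leibniz, D.leibniz_pow, hD.map_invSelf, hD.map_invariantSubst]
      simp only [smul_eq_mul]
      ring
    exact invariantSubst_injective K (by rw [map_zero]; exact hu.mul_left_eq_zero.1 h)
  have hvars : ↑f.vars ⊆ ({0, 2} : Set (Fin 3)) := by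
    intro i hi
    fin_cases i
    · simp
    · exact absurd hi (notMem_vars_of_pderiv_eq_zero hf)
    · simp
  refine mul_mem (Algebra.adjoin_mono ?_ (aeval_mem_adjoin_of_vars_subset _ hvars))
    (pow_mem (Algebra.subset_adjoin (by simp)) n)
  simp only [Set.image_insert_eq, Set.image_singleton, Matrix.cons_val_zero, Matrix.cons_val_two,
    Matrix.tail_cons, Matrix.head_cons]
  rintro _ (rfl | rfl)
  · exact Or.inr (Or.inr rfl)
  · exact Or.inl rfl

end IsParabolicExtension

end

/-- Extend `∂ = y ∂/∂x + z ∂/∂y` to `B = K[x,y,z][z⁻¹]`.  Every slice `s`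
(`∂ s = 1`) satisfies `s − y/z ∈ Ker ∂`, and the kernel of the extension equals
`K[z, z⁻¹, y² − 2xz]`. -/
theorem parabolicDerivation_localized_slices (K : Type*) [Field K] [CharZero K]
    (D : Derivation K (Localization.Away (X 2 : MvPolynomial (Fin 3) K))
          (Localization.Away (X 2 : MvPolynomial (Fin 3) K)))
    (hext : ∀ p : MvPolynomial (Fin 3) K,
      D (locMap K p) = locMap K (parabolicDerivation K p)) :
    (∀ s : Localization.Away (X 2 : MvPolynomial (Fin 3) K), D s = 1 →
      D (s - locMap K (X 1) * Localization.Away.invSelf (X 2)) = 0) ∧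
    (∀ q : Localization.Away (X 2 : MvPolynomial (Fin 3) K), D q = 0 ↔
      q ∈ Algebra.adjoin K ({locMap K (X 2), Localization.Away.invSelf (X 2),
        locMap K ((X 1) ^ 2 - 2 * X 0 * X 2)} :
        Set (Localization.Away (X 2 : MvPolynomial (Fin 3) K)))) := by
  have hD : IsParabolicExtension D := hext
  refine ⟨fun s hs => ?_, fun q => ⟨hD.mem_adjoin_of_map_eq_zero, hD.map_eq_zero_of_mem_adjoin⟩⟩
  rw [map_sub, hs, sub_eq_zero]
  exact hD.map_y_mul_invSelf.symm
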